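/- If w ∈ D(I) is bounded and ζ : X → ℝ is a Lipschitz function with compact support, then I[ζ] < ∞ and the product ζw belongs to D(I); moreover I[ζw] ≤ (‖ζ‖_∞ √(I[w]) + ‖w‖_∞ √(I[ζ]))². -/

import Mathlib

/-!
`I[w]` is the squared `L²(½ μ⊗μ)`-norm of `√k(x,y) · |w(x) - w(y)|`. The product rule
`ζ(x)w(x) - ζ(y)w(y) = ζ(x)(w(x) - w(y)) + w(y)(ζ(x) - ζ(y))` and Minkowski's inequality give
the estimate for `I[ζw]`. For `I[ζ] < ∞`: `|ζ(x) - ζ(y)|² ≤ L² d(x,y)²`, and the difference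
vanishes unless `x` or `y` lies in the compact support `K` of `ζ`; by the symmetry of `k` both
halves are bounded by `L² ∬_{K×X} k d²`.
-/

open MeasureTheory Real
open scoped ENNReal NNReal

noncomputable section

variable {X : Type*}

/-- The quadratic form `I[w] = (1/2)∬ k(x,y)(w(x)-w(y))² dμ dμ`, as an extended real. -/
def formI [MeasurableSpace X] (μ : Measure X) (k : X → X → ℝ≥0∞) (w : X → ℝ) : ℝ≥0∞ :=
  (1 / 2 : ℝ≥0∞) *
    ∫⁻ p : X × X, k p.1 p.2 * ENNReal.ofReal ((w p.1 - w p.2) ^ 2) ∂(μ.prod μ)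

/-- The form domain `D(I)`. -/
def memDI [MeasurableSpace X] (μ : Measure X) (k : X → X → ℝ≥0∞) (w : X → ℝ) : Prop :=
  Measurable w ∧ formI μ k w < ⊤

/-- The bilinear form `I[v,w]`. -/
def formI₂ [MeasurableSpace X] (μ : Measure X) (k : X → X → ℝ≥0∞) (v w : X → ℝ) : ℝ :=
  (1 / 2) *
    ∫ p : X × X, (k p.1 p.2).toReal * (v p.1 - v p.2) * (w p.1 - w p.2) ∂(μ.prod μ)

lemma ENNReal.ofReal_dist_sq {α : Type*} [PseudoMetricSpace α] (x y : α) :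
    ENNReal.ofReal (dist x y ^ 2) = edist x y ^ 2 := by
  rw [ENNReal.ofReal_pow dist_nonneg, edist_dist]

lemma ENNReal.ofReal_sub_sq (a b : ℝ) : ENNReal.ofReal ((a - b) ^ 2) = edist a b ^ 2 := by
  rw [← sq_abs, ← Real.dist_eq, ENNReal.ofReal_dist_sq]

lemma ENNReal.rpow_one_half_pow_two (x : ℝ≥0∞) : (x ^ (1 / 2 : ℝ)) ^ 2 = x := by
  simpa using ENNReal.rpow_inv_natCast_pow two_ne_zero x

lemma ENNReal.pow_two_rpow_one_half (x : ℝ≥0∞) : (x ^ 2) ^ (1 / 2 : ℝ) = x := by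
  simpa using ENNReal.pow_rpow_inv_natCast two_ne_zero x

lemma ENNReal.lintegral_add_sq_le {α : Type*} [MeasurableSpace α] {μ : Measure α}
    {f g : α → ℝ≥0∞} (hf : AEMeasurable f μ) (hg : AEMeasurable g μ) :
    ∫⁻ a, (f a + g a) ^ 2 ∂μ ≤
      ((∫⁻ a, f a ^ 2 ∂μ) ^ (1 / 2 : ℝ) + (∫⁻ a, g a ^ 2 ∂μ) ^ (1 / 2 : ℝ)) ^ 2 := by
  have h := ENNReal.lintegral_Lp_add_le hf hg one_le_two
  simp only [ENNReal.rpow_two, Pi.add_apply] at h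
  rw [← ENNReal.rpow_one_half_pow_two (∫⁻ a, (f a + g a) ^ 2 ∂μ)]
  exact pow_le_pow_left' h 2

lemma iSup_enorm_lt_top_of_norm_le {α E : Type*} [SeminormedAddGroup E] {f : α → E} {C : ℝ}
    (h : ∀ x, ‖f x‖ ≤ C) : ⨆ x, ‖f x‖ₑ < ⊤ :=
  (iSup_le fun x => (ofReal_norm (f x)).symm.trans_le (ENNReal.ofReal_le_ofReal (h x))).trans_lt
    ENNReal.ofReal_lt_top

lemma Real.edist_mul_mul_le (a b c d : ℝ) :
    edist (a * b) (c * d) ≤ ‖a‖ₑ * edist b d + ‖d‖ₑ * edist a c := by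
  rw [edist_eq_enorm_sub, edist_eq_enorm_sub, edist_eq_enorm_sub,
    show a * b - c * d = a * (b - d) + d * (a - c) by ring, ← enorm_mul, ← enorm_mul]
  exact enorm_add_le _ _

section jumpEnergy

variable [MeasurableSpace X]

def jumpEnergy (ν : Measure (X × X)) (κ : X × X → ℝ≥0∞) (w : X → ℝ) : ℝ≥0∞ :=
  ∫⁻ p, κ p * edist (w p.1) (w p.2) ^ 2 ∂ν

variable {ν : Measure (X × X)} {κ : X × X → ℝ≥0∞}

lemma jumpEnergy_smul_measure (c : ℝ≥0∞) (w : X → ℝ) :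
    jumpEnergy (c • ν) κ w = c * jumpEnergy ν κ w :=
  lintegral_smul_measure c _

lemma formI_eq_jumpEnergy (μ : Measure X) (k : X → X → ℝ≥0∞) (w : X → ℝ) :
    formI μ k w = jumpEnergy ((1 / 2 : ℝ≥0∞) • μ.prod μ) (Function.uncurry k) w := by
  simp_rw [formI, jumpEnergy_smul_measure, ENNReal.ofReal_sub_sq]
  rfl

lemma jumpEnergy_mul_le (hκ : AEMeasurable κ ν) {f g : X → ℝ} (hf : Measurable f)
    (hg : Measurable g) :
    jumpEnergy ν κ (fun x => f x * g x) ≤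
      ((⨆ x, ‖f x‖ₑ) * jumpEnergy ν κ g ^ (1 / 2 : ℝ) +
        (⨆ x, ‖g x‖ₑ) * jumpEnergy ν κ f ^ (1 / 2 : ℝ)) ^ 2 := by
  set A := ⨆ x, ‖f x‖ₑ
  set B := ⨆ x, ‖g x‖ₑ
  -- Minkowski for `√κ · A |Δg|` and `√κ · B |Δf|`, which dominate `√κ |Δ(fg)|` pointwise.
  set u : X × X → ℝ≥0∞ := fun p => κ p ^ (1 / 2 : ℝ) * (A * edist (g p.1) (g p.2))
  set v : X × X → ℝ≥0∞ := fun p => κ p ^ (1 / 2 : ℝ) * (B * edist (f p.1) (f p.2))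
  have hu : AEMeasurable u ν := by fun_prop
  have hv : AEMeasurable v ν := by fun_prop
  have hpt : ∀ p, κ p * edist (f p.1 * g p.1) (f p.2 * g p.2) ^ 2 ≤ (u p + v p) ^ 2 := by
    intro p
    have hfg : edist (f p.1 * g p.1) (f p.2 * g p.2) ≤
        A * edist (g p.1) (g p.2) + B * edist (f p.1) (f p.2) :=
      (Real.edist_mul_mul_le _ _ _ _).trans <| by
        gcongr
        exacts [le_iSup (fun x => ‖f x‖ₑ) p.1, le_iSup (fun x => ‖g x‖ₑ) p.2]
    calc κ p * edist (f p.1 * g p.1) (f p.2 * g p.2) ^ 2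
        ≤ (κ p ^ (1 / 2 : ℝ)) ^ 2 *
            (A * edist (g p.1) (g p.2) + B * edist (f p.1) (f p.2)) ^ 2 := by
          rw [ENNReal.rpow_one_half_pow_two]; gcongr
      _ = (u p + v p) ^ 2 := by simp only [u, v]; ring
  have hsq : ∀ (C : ℝ≥0∞) (h : X → ℝ), Measurable h →
      (∫⁻ p, (κ p ^ (1 / 2 : ℝ) * (C * edist (h p.1) (h p.2))) ^ 2 ∂ν) ^ (1 / 2 : ℝ) =
        C * jumpEnergy ν κ h ^ (1 / 2 : ℝ) := by
    intro C h hh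
    have : ∀ p, (κ p ^ (1 / 2 : ℝ) * (C * edist (h p.1) (h p.2))) ^ 2 =
        C ^ 2 * (κ p * edist (h p.1) (h p.2) ^ 2) := fun p => by
      rw [mul_pow, mul_pow, ENNReal.rpow_one_half_pow_two]; ring
    simp_rw [this]
    rw [lintegral_const_mul'' _ (by fun_prop), ENNReal.mul_rpow_of_nonneg _ _ (by norm_num),
      ENNReal.pow_two_rpow_one_half, jumpEnergy]
  calc jumpEnergy ν κ (fun x => f x * g x)
      ≤ ∫⁻ p, (u p + v p) ^ 2 ∂ν := lintegral_mono hpt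
    _ ≤ _ := ENNReal.lintegral_add_sq_le hu hv
    _ = _ := by rw [hsq A g hg, hsq B f hf]

lemma setLIntegral_univ_prod_eq_prod_univ (hν : MeasurePreserving Prod.swap ν ν)
    (F : X × X → ℝ≥0∞) (s : Set X) :
    ∫⁻ p in Set.univ ×ˢ s, F p ∂ν = ∫⁻ p in s ×ˢ Set.univ, F p.swap ∂ν := by
  rw [← hν.setLIntegral_comp_preimage_emb MeasurableEquiv.prodComm.measurableEmbedding,
    Set.preimage_swap_prod]

lemma jumpEnergy_lt_top_of_lipschitzWith [PseudoEMetricSpace X]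
    (hν : MeasurePreserving Prod.swap ν ν) (hκ : ∀ p, κ p.swap = κ p) {L : ℝ≥0} {ζ : X → ℝ}
    (hζ : LipschitzWith L ζ)
    (hK : ∫⁻ p in tsupport ζ ×ˢ Set.univ, κ p * edist p.1 p.2 ^ 2 ∂ν < ⊤) :
    jumpEnergy ν κ ζ < ⊤ := by
  set K := tsupport ζ
  set G : X × X → ℝ≥0∞ := fun p => κ p * edist p.1 p.2 ^ 2
  have hpt : ∀ p : X × X, κ p * edist (ζ p.1) (ζ p.2) ^ 2 ≤
      L ^ 2 * (K ×ˢ Set.univ ∪ Set.univ ×ˢ K).indicator G p := by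
    intro p
    by_cases hp : p ∈ K ×ˢ Set.univ ∪ Set.univ ×ˢ K
    · rw [Set.indicator_of_mem hp]
      calc κ p * edist (ζ p.1) (ζ p.2) ^ 2 ≤ κ p * (L * edist p.1 p.2) ^ 2 := by
            gcongr; exact hζ.edist_le_mul _ _
        _ = L ^ 2 * G p := by simp only [G]; ring
    · simp only [Set.mem_union, Set.mem_prod, Set.mem_univ, and_true, true_and, not_or] at hp
      simp [image_eq_zero_of_notMem_tsupport hp.1, image_eq_zero_of_notMem_tsupport hp.2]
  have hswap : ∫⁻ p in Set.univ ×ˢ K, G p ∂ν = ∫⁻ p in K ×ˢ Set.univ, G p ∂ν := by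
    rw [setLIntegral_univ_prod_eq_prod_univ hν]
    simp only [G, hκ, Prod.fst_swap, Prod.snd_swap, edist_comm]
  calc jumpEnergy ν κ ζ
      ≤ ∫⁻ p, L ^ 2 * (K ×ˢ Set.univ ∪ Set.univ ×ˢ K).indicator G p ∂ν := lintegral_mono hpt
    _ = L ^ 2 * ∫⁻ p, (K ×ˢ Set.univ ∪ Set.univ ×ˢ K).indicator G p ∂ν :=
        lintegral_const_mul' _ _ (by simp)
    _ ≤ L ^ 2 * (∫⁻ p in K ×ˢ Set.univ, G p ∂ν + ∫⁻ p in Set.univ ×ˢ K, G p ∂ν) := by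
        gcongr
        exact (lintegral_indicator_le _ _).trans (lintegral_union_le _ _ _)
    _ < ⊤ := by rw [hswap]; finiteness

end jumpEnergy

theorem formDomain_mul_lipschitz_general [MetricSpace X] [MeasurableSpace X] [BorelSpace X]
    (μ : Measure X) [SigmaFinite μ]
    (k : X → X → ℝ≥0∞) (hkmeas : Measurable (Function.uncurry k))
    (hksymm : ∀ x y, k x y = k y x)
    (hk : ∀ K : Set X, IsCompact K →
      ∫⁻ p in K ×ˢ (Set.univ : Set X),
          k p.1 p.2 * ENNReal.ofReal (dist p.1 p.2 ^ 2) ∂(μ.prod μ) < ⊤)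
    (w : X → ℝ) (hw : memDI μ k w) (M : ℝ) (hwbd : ∀ x, |w x| ≤ M)
    (L : ℝ≥0) (ζ : X → ℝ) (hζ : LipschitzWith L ζ) (hζc : HasCompactSupport ζ) :
    formI μ k ζ < ⊤ ∧ memDI μ k (fun x => ζ x * w x) ∧
      formI μ k (fun x => ζ x * w x) ≤
        ((⨆ x, (‖ζ x‖₊ : ℝ≥0∞)) * formI μ k w ^ (1 / 2 : ℝ) +
            (⨆ x, (‖w x‖₊ : ℝ≥0∞)) * formI μ k ζ ^ (1 / 2 : ℝ)) ^ 2 := by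
  obtain ⟨hwm, hwI⟩ := hw
  have hζm : Measurable ζ := hζ.continuous.measurable
  have hζI : formI μ k ζ < ⊤ := by
    rw [formI_eq_jumpEnergy, jumpEnergy_smul_measure]
    refine ENNReal.mul_lt_top (by simp) (jumpEnergy_lt_top_of_lipschitzWith
      Measure.measurePreserving_swap (fun p => hksymm _ _) hζ ?_)
    simpa only [ENNReal.ofReal_dist_sq, Function.uncurry_def] using hk _ hζc
  have hest : formI μ k (fun x => ζ x * w x) ≤
      ((⨆ x, (‖ζ x‖₊ : ℝ≥0∞)) * formI μ k w ^ (1 / 2 : ℝ) +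
        (⨆ x, (‖w x‖₊ : ℝ≥0∞)) * formI μ k ζ ^ (1 / 2 : ℝ)) ^ 2 := by
    simp only [formI_eq_jumpEnergy]
    exact jumpEnergy_mul_le hkmeas.aemeasurable hζm hwm
  obtain ⟨C, hC⟩ := hζc.exists_bound_of_continuous hζ.continuous
  have hζsup := iSup_enorm_lt_top_of_norm_le hC
  have hwsup := iSup_enorm_lt_top_of_norm_le (f := w) hwbd
  refine ⟨hζI, ⟨hζm.mul hwm, hest.trans_lt ?_⟩, hest⟩
  finiteness

/-- products of bounded form-domain functions with Lipschitz functions of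
compact support stay in the form domain. -/
theorem formDomain_mul_lipschitz [MetricSpace X] [MeasurableSpace X] [BorelSpace X]
    (μ : Measure X) [SigmaFinite μ]
    (k : X → X → ℝ≥0∞) (hkmeas : Measurable (Function.uncurry k))
    (hkpos : ∀ x y, 0 < k x y) (hksymm : ∀ x y, k x y = k y x)
    (hk : ∀ K : Set X, IsCompact K →
      ∫⁻ p in K ×ˢ (Set.univ : Set X),
          k p.1 p.2 * ENNReal.ofReal (dist p.1 p.2 ^ 2) ∂(μ.prod μ) < ⊤)
    (w : X → ℝ) (hw : memDI μ k w) (M : ℝ) (hwbd : ∀ x, |w x| ≤ M)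
    (L : ℝ≥0) (ζ : X → ℝ) (hζ : LipschitzWith L ζ) (hζc : HasCompactSupport ζ) :
    formI μ k ζ < ⊤ ∧ memDI μ k (fun x => ζ x * w x) ∧
      formI μ k (fun x => ζ x * w x) ≤
        ((⨆ x, (‖ζ x‖₊ : ℝ≥0∞)) * formI μ k w ^ (1 / 2 : ℝ) +
            (⨆ x, (‖w x‖₊ : ℝ≥0∞)) * formI μ k ζ ^ (1 / 2 : ℝ)) ^ 2 :=
  formDomain_mul_lipschitz_general μ k hkmeas hksymm hk w hw M hwbd L ζ hζ hζc

end
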